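/- arXiv:2309.10702 — 10 statements merged into one kernel-verified Lean document; each statement's English description precedes it below -/
import Mathlib

section
/- Let (W, 𝒜, μ) be a probability space, f : ℝⁿ × W → ℝⁿ a function such that for each x ∈ ℝⁿ the map w ↦ f(x,w) is measurable, q ⊆ ℝⁿ a set, q' ⊆ ℝⁿ a measurable set, and C a finite noise partition of W. Then for every x ∈ q, the sum over those cells c ∈ C with Post(q,c) ⊆ q' of μ(c) is at most μ({w ∈ W : f(x,w) ∈ q'}). (Lower bound of Theorem 1.) -/
open MeasureTheory Set

open scoped Classical in
/-- Lower bound of Theorem 1: for every `x ∈ q`, the sum of `μ c` over cells `c` of a finite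
noise partition with `Post(q,c) ⊆ q'` is at most the transition kernel `μ {w | f x w ∈ q'}`. -/
theorem lower_transition_bound
    {n : ℕ} {W : Type*} [MeasurableSpace W] (μ : Measure W) [IsProbabilityMeasure μ]
    (f : (Fin n → ℝ) → W → (Fin n → ℝ)) (hf : ∀ x, Measurable (f x))
    (q q' : Set (Fin n → ℝ)) (hq' : MeasurableSet q')
    {ι : Type*} [Fintype ι] (c : ι → Set W)
    (hc_meas : ∀ i, MeasurableSet (c i))
    (hc_disj : Pairwise (Function.onFun Disjoint c))
    (hc_cover : (⋃ i, c i) = Set.univ)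
    (x : Fin n → ℝ) (hx : x ∈ q) :
    ∑ i : ι, (if Set.image2 f q (c i) ⊆ q' then μ (c i) else 0)
      ≤ μ {w | f x w ∈ q'} := by
  classical
  set S : Finset ι := Finset.univ.filter (fun i => Set.image2 f q (c i) ⊆ q') with hS
  have hsum : ∑ i : ι, (if Set.image2 f q (c i) ⊆ q' then μ (c i) else 0)
      = ∑ i ∈ S, μ (c i) := by
    rw [Finset.sum_filter]
  rw [hsum]
  rw [← measure_biUnion_finset (fun i _ j _ hij => hc_disj hij) (fun i _ => hc_meas i)]
  apply measure_mono
  intro w hw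
  simp only [Set.mem_iUnion] at hw
  obtain ⟨i, hi, hwi⟩ := hw
  have : Set.image2 f q (c i) ⊆ q' := by
    simpa [hS] using hi
  exact this (Set.mem_image2_of_mem hx hwi)
end

section
/- Let (W, 𝒜, μ) be a probability space, f : ℝⁿ × W → ℝⁿ a function such that for each x ∈ ℝⁿ the map w ↦ f(x,w) is measurable, q ⊆ ℝⁿ a set, q' ⊆ ℝⁿ a measurable set, and C a finite noise partition of W. Then for every x ∈ q, μ({w ∈ W : f(x,w) ∈ q'}) is at most the sum over those cells c ∈ C with Post(q,c) ∩ q' ≠ ∅ of μ(c). (Upper bound of Theorem 1.) -/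
open MeasureTheory Set

open scoped Classical in
/-- Upper bound of Theorem 1: for every `x ∈ q`, the transition kernel `μ {w | f x w ∈ q'}` is
at most the sum of `μ c` over cells `c` of a finite noise partition with `Post(q,c) ∩ q' ≠ ∅`. -/
theorem upper_transition_bound
    {n : ℕ} {W : Type*} [MeasurableSpace W] (μ : Measure W) [IsProbabilityMeasure μ]
    (f : (Fin n → ℝ) → W → (Fin n → ℝ)) (hf : ∀ x, Measurable (f x))
    (q q' : Set (Fin n → ℝ)) (hq' : MeasurableSet q')
    {ι : Type*} [Fintype ι] (c : ι → Set W)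
    (hc_meas : ∀ i, MeasurableSet (c i))
    (hc_disj : Pairwise (Function.onFun Disjoint c))
    (hc_cover : (⋃ i, c i) = Set.univ)
    (x : Fin n → ℝ) (hx : x ∈ q) :
    μ {w | f x w ∈ q'}
      ≤ ∑ i : ι, (if Set.image2 f q (c i) ∩ q' ≠ ∅ then μ (c i) else 0) := by
  have hset : {w | f x w ∈ q'} = ⋃ i, c i ∩ {w | f x w ∈ q'} := by
    rw [← Set.iUnion_inter, hc_cover, Set.univ_inter]
  calc μ {w | f x w ∈ q'} = μ (⋃ i, c i ∩ {w | f x w ∈ q'}) := by rw [← hset]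
    _ ≤ ∑ i : ι, μ (c i ∩ {w | f x w ∈ q'}) := measure_iUnion_fintype_le _ _
    _ ≤ _ := by
        refine Finset.sum_le_sum fun i _ => ?_
        by_cases h : Set.image2 f q (c i) ∩ q' ≠ ∅
        · rw [if_pos h]
          exact measure_mono (Set.inter_subset_left)
        · rw [if_neg h]
          push_neg at h
          have : c i ∩ {w | f x w ∈ q'} = ∅ := by
            ext w
            simp only [Set.mem_inter_iff, Set.mem_setOf_eq, Set.mem_empty_iff_false, iff_false,
              not_and]
            intro hw hfw
            exact Set.eq_empty_iff_forall_notMem.mp h (f x w)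
              ⟨Set.mem_image2_of_mem hx hw, hfw⟩
          simp [this]
end

section
/- Let (W, 𝒜, μ) be a probability space, f : ℝⁿ × W → ℝⁿ with w ↦ f(x,w) measurable for each x, q ⊆ ℝⁿ a set, X ⊆ ℝⁿ a measurable set, and C a finite noise partition of W. Then for every x ∈ q, the transition kernel to the complement of X satisfies 1 − Σ_{c ∈ C : Post(q,c) ∩ X ≠ ∅} μ(c) ≤ μ({w : f(x,w) ∉ X}) ≤ 1 − Σ_{c ∈ C : Post(q,c) ⊆ X} μ(c). (Corollary on unsafe-state transitions.) -/
open MeasureTheory Set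

open scoped Classical in
/-- Corollary on unsafe-state transitions: for every `x ∈ q`, the transition kernel to the
complement of the safe set `X` satisfies
`1 − Σ_{c : Post(q,c) ∩ X ≠ ∅} μ c ≤ μ {w | f x w ∉ X} ≤ 1 − Σ_{c : Post(q,c) ⊆ X} μ c`. -/
theorem unsafe_state_transition_bounds
    {n : ℕ} {W : Type*} [MeasurableSpace W] (μ : Measure W) [IsProbabilityMeasure μ]
    (f : (Fin n → ℝ) → W → (Fin n → ℝ)) (hf : ∀ x, Measurable (f x))
    (q : Set (Fin n → ℝ)) (X : Set (Fin n → ℝ)) (hX : MeasurableSet X)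
    {ι : Type*} [Fintype ι] (c : ι → Set W)
    (hc_meas : ∀ i, MeasurableSet (c i))
    (hc_disj : Pairwise (Function.onFun Disjoint c))
    (hc_cover : (⋃ i, c i) = Set.univ)
    (x : Fin n → ℝ) (hx : x ∈ q) :
    1 - ∑ i : ι, (if Set.image2 f q (c i) ∩ X ≠ ∅ then μ (c i) else 0)
        ≤ μ {w | f x w ∉ X} ∧
    μ {w | f x w ∉ X}
        ≤ 1 - ∑ i : ι, (if Set.image2 f q (c i) ⊆ X then μ (c i) else 0) := by
  set A : Set W := {w | f x w ∈ X} with hA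
  have hAm : MeasurableSet A := (hf x) hX
  have hcompl : {w | f x w ∉ X} = Aᶜ := rfl
  have hμA : μ Aᶜ = 1 - μ A := by
    rw [measure_compl hAm (measure_ne_top μ A), measure_univ]
  -- lower bound on μ A via subset-sets
  have hlow : ∑ i : ι, (if Set.image2 f q (c i) ⊆ X then μ (c i) else 0) ≤ μ A := by
    have h1 : ∀ i : ι, (if Set.image2 f q (c i) ⊆ X then μ (c i) else 0)
        = μ (if Set.image2 f q (c i) ⊆ X then c i else ∅) := by
      intro i; split <;> simp
    simp_rw [h1]
    rw [← tsum_fintype (L := SummationFilter.unconditional ι), ← measure_iUnion (fun i j hij => by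
        simp only [Function.onFun]
        split <;> split <;>
          simp [Function.onFun, hc_disj hij, Set.disjoint_empty, Set.empty_disjoint])
      (fun i => by split; exacts [hc_meas i, MeasurableSet.empty])]
    refine measure_mono ?_
    refine Set.iUnion_subset fun i => ?_
    split
    · rename_i h
      intro w hw
      exact h (Set.mem_image2_of_mem hx hw)
    · exact Set.empty_subset _
  -- upper bound on μ A via intersecting sets
  have hup : μ A ≤ ∑ i : ι, (if Set.image2 f q (c i) ∩ X ≠ ∅ then μ (c i) else 0) := by
    have h1 : ∀ i : ι, (if Set.image2 f q (c i) ∩ X ≠ ∅ then μ (c i) else 0)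
        = μ (if Set.image2 f q (c i) ∩ X ≠ ∅ then c i else ∅) := by
      intro i; split <;> simp
    simp_rw [h1]
    refine le_trans (measure_mono ?_) (measure_iUnion_fintype_le μ _)
    intro w hw
    have : w ∈ ⋃ i, c i := hc_cover ▸ Set.mem_univ w
    obtain ⟨i, hi⟩ := Set.mem_iUnion.mp this
    refine Set.mem_iUnion.mpr ⟨i, ?_⟩
    have hne : Set.image2 f q (c i) ∩ X ≠ ∅ :=
      Set.nonempty_iff_ne_empty.mp ⟨f x w, Set.mem_image2_of_mem hx hi, hw⟩
    simpa [hne] using hi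
  rw [hcompl, hμA]
  exact ⟨tsub_le_tsub_left hup 1, tsub_le_tsub_left hlow 1⟩
end

section
/- Let (W, 𝒜, μ) be a probability space, f : ℝⁿ × W → ℝⁿ, q ⊆ ℝⁿ a nonempty set, C a finite noise partition of W such that each Post(q,c) is nonempty, and let {q₁, …, q_m} be a finite collection of pairwise disjoint subsets of ℝⁿ whose union is ℝⁿ. Then Σ_{j} Σ_{c ∈ C : Post(q,c) ⊆ q_j} μ(c) ≤ 1 ≤ Σ_{j} Σ_{c ∈ C : Post(q,c) ∩ q_j ≠ ∅} μ(c); that is, the lower transition bounds from q sum to at most 1 and the upper transition bounds sum to at least 1, so the constructed intervals define a valid interval Markov chain row. -/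
open MeasureTheory Set

open scoped Classical in
/-- The transition bounds constructed via noise partitioning form a valid IMC row: the lower
bounds sum to at most 1 and the upper bounds sum to at least 1 over a finite pairwise-disjoint
cover `{q₁, …, q_m}` of `ℝⁿ`, provided `q` is nonempty and each `Post(q,c)` is nonempty. -/
theorem valid_imc_row
    {n : ℕ} {W : Type*} [MeasurableSpace W] (μ : Measure W) [IsProbabilityMeasure μ]
    (f : (Fin n → ℝ) → W → (Fin n → ℝ))
    (q : Set (Fin n → ℝ)) (hq : q.Nonempty)
    {ι : Type*} [Fintype ι] (c : ι → Set W)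
    (hc_meas : ∀ i, MeasurableSet (c i))
    (hc_disj : Pairwise (Function.onFun Disjoint c))
    (hc_cover : (⋃ i, c i) = Set.univ)
    (hpost : ∀ i, (Set.image2 f q (c i)).Nonempty)
    {m : ℕ} (qs : Fin m → Set (Fin n → ℝ))
    (hqs_disj : Pairwise (Function.onFun Disjoint qs))
    (hqs_cover : (⋃ j, qs j) = Set.univ) :
    (∑ j : Fin m, ∑ i : ι, (if Set.image2 f q (c i) ⊆ qs j then μ (c i) else 0)) ≤ 1 ∧
    1 ≤ ∑ j : Fin m, ∑ i : ι, (if Set.image2 f q (c i) ∩ qs j ≠ ∅ then μ (c i) else 0) := by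
  have htot : ∑ i : ι, μ (c i) = 1 := by
    rw [← measure_univ (μ := μ), ← hc_cover, measure_iUnion hc_disj hc_meas, tsum_fintype]
  constructor
  · rw [Finset.sum_comm]
    calc ∑ i : ι, ∑ j : Fin m, (if Set.image2 f q (c i) ⊆ qs j then μ (c i) else 0)
        ≤ ∑ i : ι, μ (c i) := by
          refine Finset.sum_le_sum fun i _ => ?_
          by_cases h : ∃ j, Set.image2 f q (c i) ⊆ qs j
          · obtain ⟨j₀, hj₀⟩ := h
            have : ∑ j : Fin m, (if Set.image2 f q (c i) ⊆ qs j then μ (c i) else 0)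
                = μ (c i) := by
              rw [Finset.sum_eq_single j₀]
              · simp [hj₀]
              · intro j _ hj
                rw [if_neg]
                intro hsub
                obtain ⟨y, hy⟩ := hpost i
                exact hj ((hqs_disj.eq (Set.not_disjoint_iff.2
                  ⟨y, hsub hy, hj₀ hy⟩)))
              · intro h; exact absurd (Finset.mem_univ j₀) h
            exact this.le
          · push_neg at h
            simp only [if_neg (h _)]
            simp
      _ = 1 := htot
  · rw [Finset.sum_comm, ← htot]
    refine Finset.sum_le_sum fun i _ => ?_
    obtain ⟨y, hy⟩ := hpost i
    have : y ∈ ⋃ j, qs j := hqs_cover ▸ Set.mem_univ y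
    obtain ⟨j₀, hj₀⟩ := Set.mem_iUnion.1 this
    have hne : Set.image2 f q (c i) ∩ qs j₀ ≠ ∅ :=
      Set.nonempty_iff_ne_empty.1 ⟨y, hy, hj₀⟩
    calc μ (c i) = (if Set.image2 f q (c i) ∩ qs j₀ ≠ ∅ then μ (c i) else 0) := by
          simp [hne]
      _ ≤ _ := Finset.single_le_sum (f := fun j : Fin m => if Set.image2 f q (c i) ∩ qs j ≠ ∅ then μ (c i) else 0) (fun j _ => zero_le) (Finset.mem_univ j₀)
end

section
/- Let (W, 𝒜, μ) be a probability space, f : ℝⁿ × W → ℝⁿ, q ⊆ ℝⁿ, q' ⊆ ℝⁿ, and suppose the set S = {w ∈ W : ∀ x ∈ q, f(x,w) ∈ q'} is measurable. Then for every finite noise partition C of W, Σ_{c ∈ C : Post(q,c) ⊆ q'} μ(c) ≤ μ(S); i.e., μ(S) is an upper bound on the achievable lower transition bound over all noise partitions. -/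
open MeasureTheory Set

open scoped Classical in
/-- `μ {w | ∀ x ∈ q, f x w ∈ q'}` is an upper bound on the achievable lower transition bound
over all finite noise partitions. -/
theorem lower_bound_optimum
    {n : ℕ} {W : Type*} [MeasurableSpace W] (μ : Measure W) [IsProbabilityMeasure μ]
    (f : (Fin n → ℝ) → W → (Fin n → ℝ))
    (q q' : Set (Fin n → ℝ))
    (hS : MeasurableSet {w : W | ∀ x ∈ q, f x w ∈ q'})
    {ι : Type*} [Fintype ι] (c : ι → Set W)
    (hc_meas : ∀ i, MeasurableSet (c i))
    (hc_disj : Pairwise (Function.onFun Disjoint c))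
    (hc_cover : (⋃ i, c i) = Set.univ) :
    ∑ i : ι, (if Set.image2 f q (c i) ⊆ q' then μ (c i) else 0)
      ≤ μ {w : W | ∀ x ∈ q, f x w ∈ q'} := by
  set S := {w : W | ∀ x ∈ q, f x w ∈ q'} with hSdef
  have h1 : ∀ i : ι, (if Set.image2 f q (c i) ⊆ q' then μ (c i) else 0)
      ≤ μ (c i ∩ S) := by
    intro i
    split_ifs with h
    · have hsub : c i ⊆ S := fun w hw x hx => h (Set.mem_image2_of_mem hx hw)
      rw [Set.inter_eq_left.mpr hsub]
    · exact zero_le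
  calc ∑ i : ι, (if Set.image2 f q (c i) ⊆ q' then μ (c i) else 0)
      ≤ ∑ i : ι, μ (c i ∩ S) := Finset.sum_le_sum fun i _ => h1 i
    _ = μ (⋃ i ∈ Finset.univ, c i ∩ S) := by
        rw [measure_biUnion_finset
          (fun i _ j _ hij => (hc_disj hij).mono inter_subset_left inter_subset_left)
          (fun i _ => (hc_meas i).inter hS)]
    _ ≤ μ S := measure_mono (by simp [Set.iUnion_inter, Set.inter_subset_right])
end

section
/- Let (W, 𝒜, μ) be a probability space, f : ℝⁿ × W → ℝⁿ, q ⊆ ℝⁿ, q' ⊆ ℝⁿ, and let C and C' be finite noise partitions of W such that C' refines C (every cell of C' is contained in some cell of C). Then the lower-bound sum does not decrease and the upper-bound sum does not increase under refinement: Σ_{c ∈ C : Post(q,c) ⊆ q'} μ(c) ≤ Σ_{c' ∈ C' : Post(q,c') ⊆ q'} μ(c') and Σ_{c' ∈ C' : Post(q,c') ∩ q' ≠ ∅} μ(c') ≤ Σ_{c ∈ C : Post(q,c) ∩ q' ≠ ∅} μ(c). -/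
open MeasureTheory Set

open scoped Classical in
/-- Under refinement of the noise partition, the lower-bound sum does not decrease and the
upper-bound sum does not increase. -/
theorem refinement_monotone
    {n : ℕ} {W : Type*} [MeasurableSpace W] (μ : Measure W) [IsProbabilityMeasure μ]
    (f : (Fin n → ℝ) → W → (Fin n → ℝ))
    (q q' : Set (Fin n → ℝ))
    {ι : Type*} [Fintype ι] (c : ι → Set W)
    (hc_meas : ∀ i, MeasurableSet (c i))
    (hc_disj : Pairwise (Function.onFun Disjoint c))
    (hc_cover : (⋃ i, c i) = Set.univ)
    {κ : Type*} [Fintype κ] (c' : κ → Set W)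
    (hc'_meas : ∀ k, MeasurableSet (c' k))
    (hc'_disj : Pairwise (Function.onFun Disjoint c'))
    (hc'_cover : (⋃ k, c' k) = Set.univ)
    (href : ∀ k, ∃ i, c' k ⊆ c i) :
    (∑ i : ι, (if Set.image2 f q (c i) ⊆ q' then μ (c i) else 0)
        ≤ ∑ k : κ, (if Set.image2 f q (c' k) ⊆ q' then μ (c' k) else 0)) ∧
    (∑ k : κ, (if Set.image2 f q (c' k) ∩ q' ≠ ∅ then μ (c' k) else 0)
        ≤ ∑ i : ι, (if Set.image2 f q (c i) ∩ q' ≠ ∅ then μ (c i) else 0)) := by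
  classical
  obtain ⟨r, hr⟩ := Classical.axiomOfChoice href
  -- each c i is the disjoint union of the c' k with r k = i
  have hunion : ∀ i, c i = ⋃ k ∈ Finset.univ.filter (fun k => r k = i), c' k := by
    intro i
    ext w
    constructor
    · intro hw
      have : w ∈ ⋃ k, c' k := by rw [hc'_cover]; trivial
      obtain ⟨k, hk⟩ := Set.mem_iUnion.mp this
      have hrk : r k = i := by
        by_contra h
        exact (hc_disj h).le_bot ⟨hr k hk, hw⟩
      exact Set.mem_biUnion (Finset.mem_filter.mpr ⟨Finset.mem_univ k, hrk⟩) hk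
    · intro hw
      simp only [Set.mem_iUnion] at hw
      obtain ⟨k, hk, hwk⟩ := hw
      simp only [Finset.mem_filter] at hk
      exact hk.2 ▸ hr k hwk
  have key : ∀ i, μ (c i) = ∑ k ∈ Finset.univ.filter (fun k => r k = i), μ (c' k) := by
    intro i
    rw [hunion i, measure_biUnion_finset]
    · intro a ha b hb hab
      exact hc'_disj hab
    · exact fun k _ => hc'_meas k
  constructor
  · calc ∑ i : ι, (if Set.image2 f q (c i) ⊆ q' then μ (c i) else 0)
        = ∑ i : ι, ∑ k ∈ Finset.univ.filter (fun k => r k = i),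
            (if Set.image2 f q (c i) ⊆ q' then μ (c' k) else 0) := by
          refine Finset.sum_congr rfl fun i _ => ?_
          split
          · exact key i
          · simp
      _ = ∑ k : κ, (if Set.image2 f q (c (r k)) ⊆ q' then μ (c' k) else 0) := by
          rw [← Finset.sum_fiberwise Finset.univ r
            (fun k => if Set.image2 f q (c (r k)) ⊆ q' then μ (c' k) else 0)]
          refine Finset.sum_congr rfl fun i _ => Finset.sum_congr rfl fun k hk => ?_
          simp only [Finset.mem_filter] at hk
          rw [hk.2]
      _ ≤ ∑ k : κ, (if Set.image2 f q (c' k) ⊆ q' then μ (c' k) else 0) := by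
          refine Finset.sum_le_sum fun k _ => ?_
          by_cases h : Set.image2 f q (c (r k)) ⊆ q'
          · have h' : Set.image2 f q (c' k) ⊆ q' :=
              (Set.image2_subset_left (hr k)).trans h
            simp [h, h']
          · simp [h]
  · calc ∑ k : κ, (if Set.image2 f q (c' k) ∩ q' ≠ ∅ then μ (c' k) else 0)
        ≤ ∑ k : κ, (if Set.image2 f q (c (r k)) ∩ q' ≠ ∅ then μ (c' k) else 0) := by
          refine Finset.sum_le_sum fun k _ => ?_
          by_cases h : Set.image2 f q (c' k) ∩ q' ≠ ∅
          · have h' : Set.image2 f q (c (r k)) ∩ q' ≠ ∅ := by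
              intro he
              exact h (Set.eq_empty_of_subset_empty
                (he ▸ Set.inter_subset_inter_left q' (Set.image2_subset_left (hr k))))
            simp [h, h']
          · simp [h]
      _ = ∑ i : ι, (if Set.image2 f q (c i) ∩ q' ≠ ∅ then μ (c i) else 0) := by
          rw [← Finset.sum_fiberwise Finset.univ r
            (fun k => if Set.image2 f q (c (r k)) ∩ q' ≠ ∅ then μ (c' k) else 0)]
          refine Finset.sum_congr rfl fun i _ => ?_
          have : ∑ k ∈ Finset.univ.filter (fun k => r k = i),
              (if Set.image2 f q (c (r k)) ∩ q' ≠ ∅ then μ (c' k) else 0)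
            = ∑ k ∈ Finset.univ.filter (fun k => r k = i),
              (if Set.image2 f q (c i) ∩ q' ≠ ∅ then μ (c' k) else 0) := by
            refine Finset.sum_congr rfl fun k hk => ?_
            simp only [Finset.mem_filter] at hk
            rw [hk.2]
          rw [this]
          split
          · exact (key i).symm
          · simp
end

section
/- Let μ be a probability measure on ℝ, and let A, B, C, D be reals with A ≤ B and C ≤ D. For every finite noise partition 𝒞 of ℝ, Σ_{c ∈ 𝒞 : ∀ w ∈ c, [C+w, D+w] ⊆ [A,B]} μ(c) ≤ μ([A−C, B−D]); moreover, if A − C ≤ B − D, the three-cell partition {(−∞, A−C), [A−C, B−D], (B−D, ∞)} attains this value, i.e., its lower-bound sum equals μ([A−C, B−D]). (Optimality of the lower-bound partition of Corollary 1 for affine noise.) -/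
open MeasureTheory Set

open scoped Classical in
lemma affine_cond_iff (A B C D : ℝ) (hCD : C ≤ D) (s : Set ℝ) :
    (∀ w ∈ s, Set.Icc (C + w) (D + w) ⊆ Set.Icc A B) ↔ s ⊆ Set.Icc (A - C) (B - D) := by
  constructor
  · intro h w hw
    have h1 := h w hw (Set.left_mem_Icc.2 (by linarith))
    have h2 := h w hw (Set.right_mem_Icc.2 (by linarith))
    simp only [Set.mem_Icc] at h1 h2 ⊢
    constructor <;> linarith [h1.1, h2.2]
  · intro h w hw
    have := h hw
    simp only [Set.mem_Icc] at this
    exact Set.Icc_subset_Icc (by linarith [this.1]) (by linarith [this.2])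

open scoped Classical in
/-- Optimality of the lower-bound partition of Corollary 1 (affine noise): every finite noise
partition of `ℝ` has lower-bound sum at most `μ [A−C, B−D]`, and (when `A−C ≤ B−D`) the
three-cell partition `{(−∞, A−C), [A−C, B−D], (B−D, ∞)}` attains this value. -/
theorem affine_lower_partition_optimal
    (μ : Measure ℝ) [IsProbabilityMeasure μ] (A B C D : ℝ) (hAB : A ≤ B) (hCD : C ≤ D) :
    (∀ (ι : Type) [Fintype ι] (c : ι → Set ℝ),
        (∀ i, MeasurableSet (c i)) → Pairwise (Function.onFun Disjoint c) →
        (⋃ i, c i) = Set.univ →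
        ∑ i : ι, (if ∀ w ∈ c i, Set.Icc (C + w) (D + w) ⊆ Set.Icc A B then μ (c i) else 0)
          ≤ μ (Set.Icc (A - C) (B - D))) ∧
    (A - C ≤ B - D →
      ∑ i : Fin 3,
        (if ∀ w ∈ (![Set.Iio (A - C), Set.Icc (A - C) (B - D), Set.Ioi (B - D)] i),
              Set.Icc (C + w) (D + w) ⊆ Set.Icc A B
          then μ (![Set.Iio (A - C), Set.Icc (A - C) (B - D), Set.Ioi (B - D)] i) else 0)
        = μ (Set.Icc (A - C) (B - D))) := by
  constructor
  · intro ι _ c hmeas hdisj _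
    classical
    calc ∑ i : ι, (if ∀ w ∈ c i, Set.Icc (C + w) (D + w) ⊆ Set.Icc A B then μ (c i) else 0)
        = ∑ i ∈ Finset.univ.filter
            (fun i => ∀ w ∈ c i, Set.Icc (C + w) (D + w) ⊆ Set.Icc A B), μ (c i) := by
          rw [Finset.sum_filter]
      _ = μ (⋃ i ∈ Finset.univ.filter
            (fun i => ∀ w ∈ c i, Set.Icc (C + w) (D + w) ⊆ Set.Icc A B), c i) := by
          refine (measure_biUnion_finset ?_ (fun i _ => hmeas i)).symm
          intro i _ j _ hij
          exact hdisj hij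
      _ ≤ μ (Set.Icc (A - C) (B - D)) := by
          refine measure_mono ?_
          refine Set.iUnion₂_subset fun i hi => ?_
          rw [Finset.mem_filter] at hi
          exact (affine_cond_iff A B C D hCD (c i)).1 hi.2
  · intro h
    have h0 : ¬ (∀ w ∈ Set.Iio (A - C), Set.Icc (C + w) (D + w) ⊆ Set.Icc A B) := by
      intro hc
      have := (affine_cond_iff A B C D hCD _).1 hc (show A - C - 1 ∈ Set.Iio (A - C) by
        simp only [Set.mem_Iio]; linarith)
      simp only [Set.mem_Icc] at this
      linarith [this.1]
    have h2 : ¬ (∀ w ∈ Set.Ioi (B - D), Set.Icc (C + w) (D + w) ⊆ Set.Icc A B) := by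
      intro hc
      have := (affine_cond_iff A B C D hCD _).1 hc (show B - D + 1 ∈ Set.Ioi (B - D) by
        simp)
      simp only [Set.mem_Icc] at this
      linarith [this.2]
    have h1 : ∀ w ∈ Set.Icc (A - C) (B - D), Set.Icc (C + w) (D + w) ⊆ Set.Icc A B :=
      (affine_cond_iff A B C D hCD _).2 (le_refl _)
    rw [Fin.sum_univ_three]
    simp only [Matrix.cons_val_zero, Matrix.cons_val_one, Matrix.head_cons,
      Matrix.cons_val_two, Matrix.tail_cons]
    simp only [eq_false h0, eq_true h1, eq_false h2, if_false, if_true]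
    simp
end

section
/- Let μ be a probability measure on ℝ, and let A, B, C, D be reals with A ≤ B and C ≤ D. For every finite noise partition 𝒞 of ℝ, Σ_{c ∈ 𝒞 : ∃ w ∈ c, [C+w, D+w] ∩ [A,B] ≠ ∅} μ(c) ≥ μ([A−D, B−C]); moreover, the three-cell partition {(−∞, A−D), [A−D, B−C], (B−C, ∞)} attains this value, i.e., its upper-bound sum equals μ([A−D, B−C]). (Optimality of the upper-bound partition of Corollary 1 for affine noise.) -/
open MeasureTheory Set

open scoped Classical in
/-- Optimality of the upper-bound partition of Corollary 1 (affine noise): every finite noise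
partition of `ℝ` has upper-bound sum at least `μ [A−D, B−C]`, and the three-cell partition
`{(−∞, A−D), [A−D, B−C], (B−C, ∞)}` attains this value. -/
theorem affine_upper_partition_optimal
    (μ : Measure ℝ) [IsProbabilityMeasure μ] (A B C D : ℝ) (hAB : A ≤ B) (hCD : C ≤ D) :
    (∀ (ι : Type) [Fintype ι] (c : ι → Set ℝ),
        (∀ i, MeasurableSet (c i)) → Pairwise (Function.onFun Disjoint c) →
        (⋃ i, c i) = Set.univ →
        μ (Set.Icc (A - D) (B - C))
          ≤ ∑ i : ι, (if ∃ w ∈ c i, Set.Icc (C + w) (D + w) ∩ Set.Icc A B ≠ ∅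
              then μ (c i) else 0)) ∧
    (∑ i : Fin 3,
        (if ∃ w ∈ (![Set.Iio (A - D), Set.Icc (A - D) (B - C), Set.Ioi (B - C)] i),
              Set.Icc (C + w) (D + w) ∩ Set.Icc A B ≠ ∅
          then μ (![Set.Iio (A - D), Set.Icc (A - D) (B - C), Set.Ioi (B - C)] i) else 0)
        = μ (Set.Icc (A - D) (B - C))) := by
  have key : ∀ w : ℝ, (Set.Icc (C + w) (D + w) ∩ Set.Icc A B ≠ ∅) ↔
      (A - D ≤ w ∧ w ≤ B - C) := by
    intro w
    rw [← Set.nonempty_iff_ne_empty, Set.Icc_inter_Icc, Set.nonempty_Icc,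
      sup_le_iff, le_inf_iff, le_inf_iff]
    constructor
    · rintro ⟨⟨_, h1⟩, h2, _⟩
      exact ⟨by linarith, by linarith⟩
    · rintro ⟨h1, h2⟩
      exact ⟨⟨by linarith, by linarith⟩, by linarith, hAB⟩
  constructor
  · intro ι _ c hmeas hdisj hcover
    set P : ι → Prop := fun i => ∃ w ∈ c i, Set.Icc (C + w) (D + w) ∩ Set.Icc A B ≠ ∅
    have hsub : Set.Icc (A - D) (B - C) ⊆ ⋃ i ∈ Finset.univ.filter P, c i := by
      intro w hw
      have : w ∈ ⋃ i, c i := by rw [hcover]; trivial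
      obtain ⟨i, hi⟩ := Set.mem_iUnion.1 this
      exact Set.mem_iUnion₂.2 ⟨i,
        Finset.mem_filter.2 ⟨Finset.mem_univ i, w, hi, (key w).2 ⟨hw.1, hw.2⟩⟩, hi⟩
    calc μ (Set.Icc (A - D) (B - C)) ≤ μ (⋃ i ∈ Finset.univ.filter P, c i) :=
          measure_mono hsub
      _ ≤ ∑ i ∈ Finset.univ.filter P, μ (c i) := measure_biUnion_finset_le _ _
      _ = ∑ i : ι, (if P i then μ (c i) else 0) := by rw [Finset.sum_filter]
  · have hADBC : A - D ≤ B - C := by linarith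
    rw [Fin.sum_univ_three]
    have h0 : ¬ ∃ w ∈ Set.Iio (A - D), Set.Icc (C + w) (D + w) ∩ Set.Icc A B ≠ ∅ := by
      rintro ⟨w, hw, hne⟩
      exact absurd ((key w).1 hne).1 (not_le.2 hw)
    have h1 : ∃ w ∈ Set.Icc (A - D) (B - C), Set.Icc (C + w) (D + w) ∩ Set.Icc A B ≠ ∅ :=
      ⟨A - D, ⟨le_refl _, hADBC⟩, (key (A - D)).2 ⟨le_refl _, hADBC⟩⟩
    have h2 : ¬ ∃ w ∈ Set.Ioi (B - C), Set.Icc (C + w) (D + w) ∩ Set.Icc A B ≠ ∅ := by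
      rintro ⟨w, hw, hne⟩
      exact absurd ((key w).1 hne).2 (not_le.2 hw)
    simp only [Matrix.cons_val_zero, Matrix.cons_val_one, Matrix.head_cons,
      Matrix.cons_val_two, Matrix.tail_cons]
    simp only [h0, h1, h2, ↓reduceIte, zero_add, add_zero]
end

section
/- Let μ be a probability measure on ℝ with μ((0,∞)) = 1, and let A, B, C, D be reals with 0 < A ≤ B and 0 < C ≤ D. For every finite noise partition 𝒞 of (0,∞), Σ_{c ∈ 𝒞 : ∀ w ∈ c, [C·w, D·w] ⊆ [A,B]} μ(c) ≤ μ([A/C, B/D]); moreover, if A/C ≤ B/D, the three-cell partition {(0, A/C), [A/C, B/D], (B/D, ∞)} attains this value, i.e., its lower-bound sum equals μ([A/C, B/D]). (Optimality of the lower-bound partition of Corollary 2 for multiplicative noise.) -/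
open MeasureTheory Set

open scoped Classical in
/-- Optimality of the lower-bound partition of Corollary 2 (multiplicative noise): every finite
noise partition of `(0,∞)` has lower-bound sum at most `μ [A/C, B/D]`, and (when `A/C ≤ B/D`)
the three-cell partition `{(0, A/C), [A/C, B/D], (B/D, ∞)}` attains this value. -/
theorem multiplicative_lower_partition_optimal
    (μ : Measure ℝ) [IsProbabilityMeasure μ] (hμ : μ (Set.Ioi (0 : ℝ)) = 1)
    (A B C D : ℝ) (hA : 0 < A) (hAB : A ≤ B) (hC : 0 < C) (hCD : C ≤ D) :
    (∀ (ι : Type) [Fintype ι] (c : ι → Set ℝ),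
        (∀ i, MeasurableSet (c i)) → Pairwise (Function.onFun Disjoint c) →
        (⋃ i, c i) = Set.Ioi (0 : ℝ) →
        ∑ i : ι, (if ∀ w ∈ c i, Set.Icc (C * w) (D * w) ⊆ Set.Icc A B then μ (c i) else 0)
          ≤ μ (Set.Icc (A / C) (B / D))) ∧
    (A / C ≤ B / D →
      ∑ i : Fin 3,
        (if ∀ w ∈ (![Set.Ioo 0 (A / C), Set.Icc (A / C) (B / D), Set.Ioi (B / D)] i),
              Set.Icc (C * w) (D * w) ⊆ Set.Icc A B
          then μ (![Set.Ioo 0 (A / C), Set.Icc (A / C) (B / D), Set.Ioi (B / D)] i) else 0)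
        = μ (Set.Icc (A / C) (B / D))) := by
  have hD : 0 < D := lt_of_lt_of_le hC hCD
  -- key characterization for positive w
  have key : ∀ w : ℝ, 0 < w →
      ((Set.Icc (C * w) (D * w) ⊆ Set.Icc A B) ↔ (A / C ≤ w ∧ w ≤ B / D)) := by
    intro w hw
    constructor
    · intro h
      have hmem : C * w ∈ Set.Icc (C * w) (D * w) :=
        ⟨le_refl _, mul_le_mul_of_nonneg_right hCD hw.le⟩
      have hmem2 : D * w ∈ Set.Icc (C * w) (D * w) := by
        constructor
        · exact mul_le_mul_of_nonneg_right hCD hw.le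
        · exact le_refl _
      have h1 := h hmem
      have h2 := h hmem2
      constructor
      · rw [div_le_iff₀ hC]; linarith [h1.1]
      · rw [le_div_iff₀ hD]; linarith [h2.2]
    · rintro ⟨h1, h2⟩ x ⟨hx1, hx2⟩
      have hA' : A ≤ C * w := by rw [div_le_iff₀ hC] at h1; linarith
      have hB' : D * w ≤ B := by rw [le_div_iff₀ hD] at h2; linarith
      exact ⟨le_trans hA' hx1, le_trans hx2 hB'⟩
  constructor
  · intro ι _ c hmeas hdisj hunion
    set d : ι → Set ℝ := fun i =>
      if ∀ w ∈ c i, Set.Icc (C * w) (D * w) ⊆ Set.Icc A B then c i else ∅ with hd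
    have hdsub : ∀ i, d i ⊆ c i := by
      intro i; rw [hd]; dsimp only; split <;> simp
    have hdmeas : ∀ i, MeasurableSet (d i) := by
      intro i; rw [hd]; dsimp only; split
      · exact hmeas i
      · exact MeasurableSet.empty
    have hddisj : Pairwise (Function.onFun Disjoint d) := by
      intro i j hij
      exact (hdisj hij).mono (hdsub i) (hdsub j)
    have heq : ∀ i, (if ∀ w ∈ c i, Set.Icc (C * w) (D * w) ⊆ Set.Icc A B
        then μ (c i) else 0) = μ (d i) := by
      intro i; rw [hd]; dsimp only; split
      · rfl
      · simp
    calc ∑ i : ι, (if ∀ w ∈ c i, Set.Icc (C * w) (D * w) ⊆ Set.Icc A B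
            then μ (c i) else 0)
        = ∑ i : ι, μ (d i) := Finset.sum_congr rfl (fun i _ => heq i)
      _ = μ (⋃ i, d i) := by
          rw [measure_iUnion hddisj hdmeas, tsum_fintype]
      _ ≤ μ (Set.Icc (A / C) (B / D)) := by
          apply measure_mono
          intro x hx
          obtain ⟨i, hi⟩ := Set.mem_iUnion.mp hx
          have hP : ∀ w ∈ c i, Set.Icc (C * w) (D * w) ⊆ Set.Icc A B := by
            by_contra hnot
            rw [hd] at hi; dsimp only at hi
            rw [if_neg hnot] at hi
            exact hi
          have hxc : x ∈ c i := hdsub i hi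
          have hxpos : (0 : ℝ) < x := by
            have : x ∈ Set.Ioi (0 : ℝ) := hunion ▸ Set.mem_iUnion.mpr ⟨i, hxc⟩
            exact this
          exact (key x hxpos).mp (hP x hxc)
  · intro hle
    have hAC : 0 < A / C := div_pos hA hC
    have hBD : 0 < B / D := lt_of_lt_of_le hAC hle
    rw [Fin.sum_univ_three]
    rw [if_neg, if_pos, if_neg]
    simp only [Matrix.cons_val_zero, Matrix.cons_val_one, Matrix.head_cons,
      Matrix.cons_val_two, Matrix.tail_cons]
    · simp
    · -- Ioi (B/D) fails
      intro h
      have hw : B / D + 1 ∈ Set.Ioi (B / D) := by simp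
      have := (key (B / D + 1) (by linarith)).mp (h _ hw)
      linarith [this.2]
    · -- middle holds
      intro w hw
      have hwpos : 0 < w := lt_of_lt_of_le hAC hw.1
      exact (key w hwpos).mpr hw
    · -- Ioo 0 (A/C) fails
      intro h
      have hw : A / C / 2 ∈ Set.Ioo (0 : ℝ) (A / C) := ⟨by linarith, by linarith⟩
      have := (key (A / C / 2) hw.1).mp (h _ hw)
      linarith [this.1]
end

section
/- Let μ be a probability measure on ℝ with μ((0,∞)) = 1, and let A, B, C, D be reals with 0 < A ≤ B and 0 < C ≤ D. For every finite noise partition 𝒞 of (0,∞), Σ_{c ∈ 𝒞 : ∃ w ∈ c, [C·w, D·w] ∩ [A,B] ≠ ∅} μ(c) ≥ μ([A/D, B/C]); moreover, the three-cell partition {(0, A/D), [A/D, B/C], (B/C, ∞)} attains this value, i.e., its upper-bound sum equals μ([A/D, B/C]). (Optimality of the upper-bound partition of Corollary 2 for multiplicative noise.) -/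
open MeasureTheory Set

lemma mul_key (A B C D : ℝ) (hA : 0 < A) (hAB : A ≤ B) (hC : 0 < C) (hCD : C ≤ D)
    (w : ℝ) (hw : 0 < w) :
    (Set.Icc (C * w) (D * w) ∩ Set.Icc A B ≠ ∅) ↔ (A / D ≤ w ∧ w ≤ B / C) := by
  have hD : 0 < D := lt_of_lt_of_le hC hCD
  rw [← Set.nonempty_iff_ne_empty, Set.Icc_inter_Icc, Set.nonempty_Icc, le_min_iff, max_le_iff,
    max_le_iff]
  constructor
  · rintro ⟨⟨_, h1⟩, h2, _⟩
    exact ⟨(div_le_iff₀ hD).2 (by linarith), (le_div_iff₀ hC).2 (by linarith)⟩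
  · rintro ⟨h1, h2⟩
    have hA' : A ≤ D * w := by rw [div_le_iff₀ hD] at h1; linarith
    have hB' : C * w ≤ B := by rw [le_div_iff₀ hC] at h2; linarith
    have hCD' : C * w ≤ D * w := by nlinarith
    exact ⟨⟨hCD', hA'⟩, hB', hAB⟩

open scoped Classical in
/-- Optimality of the upper-bound partition of Corollary 2 (multiplicative noise): every finite
noise partition of `(0,∞)` has upper-bound sum at least `μ [A/D, B/C]`, and the three-cell
partition `{(0, A/D), [A/D, B/C], (B/C, ∞)}` attains this value. -/
theorem multiplicative_upper_partition_optimal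
    (μ : Measure ℝ) [IsProbabilityMeasure μ] (hμ : μ (Set.Ioi (0 : ℝ)) = 1)
    (A B C D : ℝ) (hA : 0 < A) (hAB : A ≤ B) (hC : 0 < C) (hCD : C ≤ D) :
    (∀ (ι : Type) [Fintype ι] (c : ι → Set ℝ),
        (∀ i, MeasurableSet (c i)) → Pairwise (Function.onFun Disjoint c) →
        (⋃ i, c i) = Set.Ioi (0 : ℝ) →
        μ (Set.Icc (A / D) (B / C))
          ≤ ∑ i : ι, (if ∃ w ∈ c i, Set.Icc (C * w) (D * w) ∩ Set.Icc A B ≠ ∅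
              then μ (c i) else 0)) ∧
    (∑ i : Fin 3,
        (if ∃ w ∈ (![Set.Ioo 0 (A / D), Set.Icc (A / D) (B / C), Set.Ioi (B / C)] i),
              Set.Icc (C * w) (D * w) ∩ Set.Icc A B ≠ ∅
          then μ (![Set.Ioo 0 (A / D), Set.Icc (A / D) (B / C), Set.Ioi (B / C)] i) else 0)
        = μ (Set.Icc (A / D) (B / C))) := by
  have hD : 0 < D := lt_of_lt_of_le hC hCD
  have hAD : 0 < A / D := div_pos hA hD
  have hADBC : A / D ≤ B / C := by
    rw [div_le_div_iff₀ hD hC]; nlinarith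
  constructor
  · intro ι _ c hmeas hdisj hcover
    set S := Set.Icc (A / D) (B / C) with hS
    have hsub : S ⊆ ⋃ i, c i := by
      rw [hcover]
      intro x hx
      exact lt_of_lt_of_le hAD hx.1
    calc μ S ≤ μ (⋃ i, c i ∩ S) := by
          apply measure_mono
          intro x hx
          obtain ⟨_, ⟨i, rfl⟩, hi⟩ := hsub hx
          exact Set.mem_iUnion.2 ⟨i, hi, hx⟩
      _ ≤ ∑ i, μ (c i ∩ S) := measure_iUnion_fintype_le μ _
      _ ≤ ∑ i, (if ∃ w ∈ c i, Set.Icc (C * w) (D * w) ∩ Set.Icc A B ≠ ∅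
              then μ (c i) else 0) := by
          apply Finset.sum_le_sum
          intro i _
          rcases Set.eq_empty_or_nonempty (c i ∩ S) with h | ⟨w, hw1, hw2⟩
          · simp [h]
          · have hwpos : 0 < w := lt_of_lt_of_le hAD hw2.1
            have : ∃ w ∈ c i, Set.Icc (C * w) (D * w) ∩ Set.Icc A B ≠ ∅ :=
              ⟨w, hw1, (mul_key A B C D hA hAB hC hCD w hwpos).2 ⟨hw2.1, hw2.2⟩⟩
            rw [if_pos this]
            exact measure_mono Set.inter_subset_left
  · rw [Fin.sum_univ_three]
    have h0 : ¬ ∃ w ∈ Set.Ioo 0 (A / D), Set.Icc (C * w) (D * w) ∩ Set.Icc A B ≠ ∅ := by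
      rintro ⟨w, hw, hne⟩
      have := ((mul_key A B C D hA hAB hC hCD w hw.1).1 hne).1
      linarith [hw.2]
    have h1 : ∃ w ∈ Set.Icc (A / D) (B / C), Set.Icc (C * w) (D * w) ∩ Set.Icc A B ≠ ∅ :=
      ⟨A / D, ⟨le_refl _, hADBC⟩,
        (mul_key A B C D hA hAB hC hCD _ hAD).2 ⟨le_refl _, hADBC⟩⟩
    have h2 : ¬ ∃ w ∈ Set.Ioi (B / C), Set.Icc (C * w) (D * w) ∩ Set.Icc A B ≠ ∅ := by
      rintro ⟨w, hw, hne⟩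
      have hwpos : 0 < w := lt_of_lt_of_le (lt_of_lt_of_le hAD hADBC) (le_of_lt hw)
      have := ((mul_key A B C D hA hAB hC hCD w hwpos).1 hne).2
      exact absurd hw (not_lt.2 this)
    simp only [Set.mem_Ioo, Set.mem_Icc, Set.mem_Ioi, ne_eq] at h0 h1 h2
    simp [h0, h1, h2]
end
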